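/- arXiv:2302.01128 — 5 statements merged into one kernel-verified Lean document; each statement's English description precedes it below -/
import Mathlib

section
/- Let $\phi_{F++}(\mathbf{z}) = \frac{D}{\sqrt{r}}\left(\exp(-\widehat{A}\|\omega_i\|^2 + B\,\omega_i^\top \mathbf{z} + C\|\mathbf{z}\|^2)\right)_{i=1}^r$ with $\omega_1,\dots,\omega_r \sim \mathcal{N}(0, I_N)$ i.i.d., $\widehat{A} > 0$, $B = \sqrt{1+4\widehat{A}}$, $C = -\frac{1}{2}$, $D = (1+4\widehat{A})^{N/4}$. Then for all $\mathbf{x}, \mathbf{y} \in \mathbb{R}^N$, $\mathbb{E}[\phi_{F++}(\mathbf{x})^\top \phi_{F++}(\mathbf{y})] = \exp(\mathbf{x}^\top \mathbf{y})$, i.e., the FAVOR++ random features give an unbiased estimator of the softmax kernel. -/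
/-!
Each summand `φ(x)ᵢ φ(y)ᵢ` equals
`D² / r · exp (-(‖x‖² + ‖y‖²) / 2) · exp (-2Â ‖ωᵢ‖² + B ωᵢᵀ(x + y))`.
Completing the square in each coordinate gives, for `ω ~ 𝒩(0, I_N)` and `1 + 2a > 0`,
`E exp (-a ‖ω‖² + bᵀω) = (1 + 2a)^(-N/2) exp (‖b‖² / (2(1 + 2a)))`.
For `a = 2Â` we have `1 + 2a = B² = D⁴`, so the constants cancel and the exponent becomes
`‖x + y‖² / 2 - (‖x‖² + ‖y‖²) / 2 = xᵀy`: each of the `r` summands has mean `exp (xᵀy) / r`.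
-/

open MeasureTheory ProbabilityTheory Real Finset

lemma exp_quadratic_eq_mul_exp_neg_mul_sq_sub {c : ℝ} (hc : c ≠ 0) (b t : ℝ) :
    rexp (-c * t ^ 2 + b * t) = rexp (b ^ 2 / (4 * c)) * rexp (-c * (t - b / (2 * c)) ^ 2) := by
  rw [← exp_add]
  congr 1
  field_simp
  ring

lemma integrable_exp_neg_mul_sq_add_mul {c : ℝ} (hc : 0 < c) (b : ℝ) :
    Integrable fun t : ℝ => rexp (-c * t ^ 2 + b * t) := by
  simp_rw [exp_quadratic_eq_mul_exp_neg_mul_sq_sub hc.ne']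
  exact ((integrable_exp_neg_mul_sq hc).comp_sub_right _).const_mul _

lemma integral_exp_neg_mul_sq_add_mul {c : ℝ} (hc : 0 < c) (b : ℝ) :
    ∫ t : ℝ, rexp (-c * t ^ 2 + b * t) = √(π / c) * rexp (b ^ 2 / (4 * c)) := by
  simp_rw [exp_quadratic_eq_mul_exp_neg_mul_sq_sub hc.ne']
  rw [integral_const_mul, integral_sub_right_eq_self (fun t => rexp (-c * t ^ 2)),
    integral_gaussian, mul_comm]

lemma integrable_gaussianReal_iff_mul_gaussianPDFReal {μ : ℝ} {v : NNReal} (hv : v ≠ 0)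
    {f : ℝ → ℝ} :
    Integrable f (gaussianReal μ v) ↔ Integrable (fun x => gaussianPDFReal μ v x * f x) := by
  rw [gaussianReal_of_var_ne_zero _ hv, integrable_withDensity_iff_integrable_smul'
    (measurable_gaussianPDF μ v) (ae_of_all _ fun _ => gaussianPDF_lt_top)]
  simp [toReal_gaussianPDF]

lemma gaussianPDFReal_zero_one_mul_exp_quadratic (a b t : ℝ) :
    gaussianPDFReal 0 1 t * rexp (-a * t ^ 2 + b * t)
      = (√(2 * π))⁻¹ * rexp (-((1 + 2 * a) / 2) * t ^ 2 + b * t) := by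
  rw [gaussianPDFReal, mul_assoc, ← exp_add]
  congr 2
  · simp
  · push_cast; ring

lemma integrable_exp_quadratic_gaussianReal {a : ℝ} (ha : 0 < 1 + 2 * a) (b : ℝ) :
    Integrable (fun t => rexp (-a * t ^ 2 + b * t)) (gaussianReal 0 1) := by
  rw [integrable_gaussianReal_iff_mul_gaussianPDFReal one_ne_zero]
  simp_rw [gaussianPDFReal_zero_one_mul_exp_quadratic]
  exact (integrable_exp_neg_mul_sq_add_mul (half_pos ha) b).const_mul _

lemma integral_exp_quadratic_gaussianReal {a : ℝ} (ha : 0 < 1 + 2 * a) (b : ℝ) :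
    ∫ t, rexp (-a * t ^ 2 + b * t) ∂gaussianReal 0 1
      = (1 + 2 * a) ^ (-(1 : ℝ) / 2) * rexp (b ^ 2 / (2 * (1 + 2 * a))) := by
  rw [integral_gaussianReal_eq_integral_smul one_ne_zero]
  simp_rw [smul_eq_mul, gaussianPDFReal_zero_one_mul_exp_quadratic]
  rw [integral_const_mul, integral_exp_neg_mul_sq_add_mul (half_pos ha), ← mul_assoc]
  congr 1
  · have : (2 * π)⁻¹ * (π / ((1 + 2 * a) / 2)) = (1 + 2 * a)⁻¹ := by field_simp
    rw [← sqrt_inv, ← sqrt_mul (by positivity), this, sqrt_eq_rpow, ← rpow_neg_one,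
      ← rpow_mul ha.le]
    norm_num
  · congr 1; ring

section Pi
variable {ι : Type*} [Fintype ι]

lemma integral_sum_comp_eval {X E : Type*} [MeasurableSpace X] [NormedAddCommGroup E]
    [NormedSpace ℝ E] {μ : Measure X} [IsProbabilityMeasure μ] {F : X → E}
    (hF : Integrable F μ) :
    ∫ ω : ι → X, ∑ i, F (ω i) ∂Measure.pi (fun _ => μ) = Fintype.card ι • ∫ x, F x ∂μ := by
  rw [integral_finsetSum _ fun i _ => integrable_comp_eval (i := i) hF,
    sum_congr rfl fun i _ =>
      integral_comp_eval (μ := fun _ => μ) (i := i) hF.aestronglyMeasurable,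
    sum_const, card_univ]

lemma exp_quadratic_eq_prod (a : ℝ) (b w : ι → ℝ) :
    rexp (-a * ∑ j, w j ^ 2 + ∑ j, b j * w j) = ∏ j, rexp (-a * w j ^ 2 + b j * w j) := by
  rw [← exp_sum, mul_sum, ← sum_add_distrib]

lemma integrable_exp_quadratic_pi_gaussianReal {a : ℝ} (ha : 0 < 1 + 2 * a) (b : ι → ℝ) :
    Integrable (fun w : ι → ℝ => rexp (-a * ∑ j, w j ^ 2 + ∑ j, b j * w j))
      (Measure.pi fun _ => gaussianReal 0 1) := by
  simp_rw [exp_quadratic_eq_prod]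
  exact Integrable.fintype_prod fun j => integrable_exp_quadratic_gaussianReal ha (b j)

lemma integral_exp_quadratic_pi_gaussianReal {a : ℝ} (ha : 0 < 1 + 2 * a) (b : ι → ℝ) :
    ∫ w : ι → ℝ, rexp (-a * ∑ j, w j ^ 2 + ∑ j, b j * w j) ∂Measure.pi (fun _ => gaussianReal 0 1)
      = (1 + 2 * a) ^ (-(Fintype.card ι : ℝ) / 2) * rexp (∑ j, b j ^ 2 / (2 * (1 + 2 * a))) := by
  simp_rw [exp_quadratic_eq_prod]
  rw [integral_fintype_prod_eq_prod (fun j t => rexp (-a * t ^ 2 + b j * t))]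
  simp_rw [integral_exp_quadratic_gaussianReal ha]
  rw [prod_mul_distrib, prod_const, ← exp_sum, card_univ, ← rpow_natCast, ← rpow_mul ha.le]
  congr 2
  ring

end Pi

/-- `favorPlusPlusFeature r Â z ωᵢ` is the `i`-th coordinate of `φ_{F++}(z)`. -/
noncomputable def favorPlusPlusFeature {N : ℕ} (r : ℕ) (A : ℝ) (z w : Fin N → ℝ) : ℝ :=
  (1 + 4 * A) ^ ((N : ℝ) / 4) / √r *
    rexp (-A * (∑ j, w j ^ 2) + √(1 + 4 * A) * (∑ j, w j * z j) + (-(1 : ℝ) / 2) * ∑ j, z j ^ 2)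

section FavorPlusPlus
variable {N : ℕ} (r : ℕ) {A : ℝ} (x y w : Fin N → ℝ)

lemma favorPlusPlusFeature_mul_favorPlusPlusFeature (hA : 0 < 1 + 4 * A) :
    favorPlusPlusFeature r A x w * favorPlusPlusFeature r A y w
      = (1 + 4 * A) ^ ((N : ℝ) / 2) / r * rexp (-(∑ j, x j ^ 2 + ∑ j, y j ^ 2) / 2) *
        rexp (-(2 * A) * ∑ j, w j ^ 2 + ∑ j, √(1 + 4 * A) * (x j + y j) * w j) := by
  have hsum : ∑ j, √(1 + 4 * A) * (x j + y j) * w j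
      = √(1 + 4 * A) * ∑ j, w j * x j + √(1 + 4 * A) * ∑ j, w j * y j := by
    rw [mul_sum, mul_sum, ← sum_add_distrib]
    exact sum_congr rfl fun j _ => by ring
  have hpow : (1 + 4 * A) ^ ((N : ℝ) / 2)
      = (1 + 4 * A) ^ ((N : ℝ) / 4) * (1 + 4 * A) ^ ((N : ℝ) / 4) := by
    rw [← rpow_add hA]
    congr 1
    ring
  rw [favorPlusPlusFeature, favorPlusPlusFeature, hsum, hpow, mul_mul_mul_comm,
    div_mul_div_comm, mul_self_sqrt (Nat.cast_nonneg _), mul_assoc, ← exp_add, ← exp_add]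
  congr 2
  ring

lemma integrable_favorPlusPlusFeature_mul_favorPlusPlusFeature (hA : 0 < 1 + 4 * A) :
    Integrable (fun w => favorPlusPlusFeature r A x w * favorPlusPlusFeature r A y w)
      (Measure.pi fun _ => gaussianReal 0 1) := by
  simp_rw [favorPlusPlusFeature_mul_favorPlusPlusFeature r x y _ hA]
  exact (integrable_exp_quadratic_pi_gaussianReal (by linarith) _).const_mul _

lemma integral_favorPlusPlusFeature_mul_favorPlusPlusFeature (hA : 0 < 1 + 4 * A) :
    ∫ w, favorPlusPlusFeature r A x w * favorPlusPlusFeature r A y w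
        ∂Measure.pi (fun _ => gaussianReal 0 1)
      = rexp (∑ j, x j * y j) / r := by
  have hA' : 0 < 1 + 2 * (2 * A) := by linarith
  simp_rw [favorPlusPlusFeature_mul_favorPlusPlusFeature r x y _ hA]
  have hquad : ∑ j, (√(1 + 4 * A) * (x j + y j)) ^ 2 / (2 * (1 + 4 * A))
      = (∑ j, x j ^ 2 + ∑ j, y j ^ 2) / 2 + ∑ j, x j * y j := by
    rw [← sum_add_distrib, sum_div, ← sum_add_distrib]
    refine sum_congr rfl fun j _ => ?_
    rw [mul_pow, sq_sqrt hA.le]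
    field_simp
    ring
  rw [integral_const_mul, integral_exp_quadratic_pi_gaussianReal hA', Fintype.card_fin,
    show 1 + 2 * (2 * A) = 1 + 4 * A by ring, hquad, exp_add, neg_div, exp_neg, neg_div,
    rpow_neg hA.le]
  field_simp

end FavorPlusPlus

/-- The FAVOR++ random feature map with `Â > 0`, `B = √(1+4Â)`, `C = -1/2`,
`D = (1+4Â)^(N/4)` and i.i.d. Gaussian projections `ω₁,…,ω_r ~ N(0,I_N)` gives an
unbiased estimator of the softmax kernel: `E[φ(x)ᵀφ(y)] = exp(xᵀy)`. -/
theorem favorPlusPlus_unbiased (N r : ℕ) (hr : 0 < r) (Ahat : ℝ) (hA : 0 < Ahat)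
    (x y : Fin N → ℝ) :
    ∫ ω : Fin r → Fin N → ℝ,
        ∑ i : Fin r,
          ((1 + 4 * Ahat) ^ ((N : ℝ) / 4) / Real.sqrt r *
            Real.exp (-Ahat * (∑ j, ω i j ^ 2) +
              Real.sqrt (1 + 4 * Ahat) * (∑ j, ω i j * x j) + (-(1 : ℝ)/2) * ∑ j, x j ^ 2)) *
          ((1 + 4 * Ahat) ^ ((N : ℝ) / 4) / Real.sqrt r *
            Real.exp (-Ahat * (∑ j, ω i j ^ 2) +
              Real.sqrt (1 + 4 * Ahat) * (∑ j, ω i j * y j) + (-(1 : ℝ)/2) * ∑ j, y j ^ 2))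
        ∂(Measure.pi fun _ : Fin r => Measure.pi fun _ : Fin N => gaussianReal 0 1) =
      Real.exp (∑ j, x j * y j) := by
  have hA' : 0 < 1 + 4 * Ahat := by linarith
  show ∫ ω : Fin r → Fin N → ℝ,
      ∑ i, favorPlusPlusFeature r Ahat x (ω i) * favorPlusPlusFeature r Ahat y (ω i)
      ∂(Measure.pi fun _ => Measure.pi fun _ => gaussianReal 0 1) = _
  rw [integral_sum_comp_eval (integrable_favorPlusPlusFeature_mul_favorPlusPlusFeature r x y hA'),
    integral_favorPlusPlusFeature_mul_favorPlusPlusFeature r x y hA',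
    Fintype.card_fin, nsmul_eq_mul, mul_div_cancel₀ _ (Nat.cast_ne_zero.mpr hr.ne')]
end

section
/- Let $\phi_{F+}(\mathbf{z}) = \frac{1}{\sqrt{r}}\exp(-\|\mathbf{z}\|^2/2)\left(\exp(\omega_i^\top \mathbf{z})\right)_{i=1}^r$ with i.i.d. $\omega_i \sim \mathcal{N}(0, I_N)$. Then $\mathbb{E}[\phi_{F+}(\mathbf{x})^\top \phi_{F+}(\mathbf{y})] = \exp(\mathbf{x}^\top \mathbf{y})$ for all $\mathbf{x}, \mathbf{y} \in \mathbb{R}^N$. -/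
open MeasureTheory ProbabilityTheory Real
open scoped NNReal

/-!
Each summand factors as `φ(x)ᵢ φ(y)ᵢ = r⁻¹ exp(xᵀy) · exp(ωᵢᵀ(x + y) - ‖x + y‖²/2)`, since
`‖x‖² + ‖y‖² = ‖x + y‖² - 2xᵀy`. The Gaussian moment generating function
`E exp(ωᵀz) = exp(‖z‖²/2)` gives the last factor mean one, and the `r` identically distributed
summands cancel the `r⁻¹`.
-/

section GaussianVector

variable {ι : Type*} [Fintype ι] (μ : ℝ) (v : ℝ≥0) (z : ι → ℝ)

lemma exp_sum_mul_eq_prod_exp (ω : ι → ℝ) : rexp (∑ j, ω j * z j) = ∏ j, rexp (z j * ω j) := by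
  simp_rw [Real.exp_sum, mul_comm]

lemma integrable_exp_sum_mul_pi_gaussianReal :
    Integrable (fun ω : ι → ℝ ↦ rexp (∑ j, ω j * z j)) (Measure.pi fun _ ↦ gaussianReal μ v) := by
  simp_rw [exp_sum_mul_eq_prod_exp]
  exact Integrable.fintype_prod fun j ↦ integrable_exp_mul_gaussianReal (z j)

lemma integral_exp_sum_mul_pi_gaussianReal :
    ∫ ω : ι → ℝ, rexp (∑ j, ω j * z j) ∂(Measure.pi fun _ ↦ gaussianReal μ v) =
      rexp (∑ j, (μ * z j + v * z j ^ 2 / 2)) := by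
  simp_rw [exp_sum_mul_eq_prod_exp, integral_fintype_prod_eq_prod (fun j w ↦ rexp (z j * w)),
    Real.exp_sum]
  congr with j
  exact congrFun mgf_id_gaussianReal (z j)

end GaussianVector

lemma integral_sum_comp_eval_pi {ι E F : Type*} [Fintype ι] [MeasurableSpace E]
    [NormedAddCommGroup F] [NormedSpace ℝ F] {μ : Measure E} [IsProbabilityMeasure μ]
    {f : E → F} (hf : Integrable f μ) :
    ∫ ω : ι → E, ∑ i, f (ω i) ∂(Measure.pi fun _ ↦ μ) = Fintype.card ι • ∫ x, f x ∂μ := by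
  rw [integral_finsetSum _ fun i _ ↦ integrable_comp_eval hf]
  simp [integral_comp_eval (μ := fun _ : ι ↦ μ) hf.aestronglyMeasurable]

/-- The coordinate of `φ_{F+}(z)` belonging to the Gaussian sample `w`. -/
noncomputable def favorFeature {ι : Type*} [Fintype ι] (r : ℕ) (z w : ι → ℝ) : ℝ :=
  1 / √r * rexp (-(∑ j, z j ^ 2) / 2) * rexp (∑ j, w j * z j)

lemma favorFeature_mul_favorFeature {ι : Type*} [Fintype ι] (r : ℕ) (x y w : ι → ℝ) :
    favorFeature r x w * favorFeature r y w =
      (r : ℝ)⁻¹ * rexp (∑ j, x j * y j - ∑ j, (x j + y j) ^ 2 / 2) *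
        rexp (∑ j, w j * (x j + y j)) := by
  have hr : 1 / √(r : ℝ) * (1 / √r) = (r : ℝ)⁻¹ := by
    rw [one_div_mul_one_div, Real.mul_self_sqrt r.cast_nonneg, one_div]
  have hexp : -(∑ j, x j ^ 2) / 2 + -(∑ j, y j ^ 2) / 2 + (∑ j, w j * x j + ∑ j, w j * y j) =
      (∑ j, x j * y j - ∑ j, (x j + y j) ^ 2 / 2) + ∑ j, w j * (x j + y j) := by
    simp only [neg_div, Finset.sum_div, ← Finset.sum_neg_distrib, ← Finset.sum_add_distrib,
      ← Finset.sum_sub_distrib]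
    exact Finset.sum_congr rfl fun j _ ↦ by ring
  calc favorFeature r x w * favorFeature r y w
      = (1 / √r * (1 / √r)) * rexp (-(∑ j, x j ^ 2) / 2 + -(∑ j, y j ^ 2) / 2 +
          (∑ j, w j * x j + ∑ j, w j * y j)) := by
        simp only [favorFeature, Real.exp_add]; ring
    _ = _ := by rw [hr, hexp, Real.exp_add, mul_assoc]

/-- The FAVOR+ positive random feature map
`φ(z) = (1/√r) exp(-‖z‖²/2) (exp(ωᵢᵀz))ᵢ` with i.i.d. `ωᵢ ~ N(0, I_N)` gives an
unbiased estimator of the softmax kernel: `E[φ(x)ᵀφ(y)] = exp(xᵀy)`. -/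
theorem favorPlus_unbiased (N r : ℕ) (hr : 0 < r) (x y : Fin N → ℝ) :
    ∫ ω : Fin r → Fin N → ℝ,
        ∑ i : Fin r,
          (1 / Real.sqrt r * Real.exp (-(∑ j, x j ^ 2) / 2) * Real.exp (∑ j, ω i j * x j)) *
          (1 / Real.sqrt r * Real.exp (-(∑ j, y j ^ 2) / 2) * Real.exp (∑ j, ω i j * y j))
        ∂(Measure.pi fun _ : Fin r => Measure.pi fun _ : Fin N => gaussianReal 0 1) =
      Real.exp (∑ j, x j * y j) := by
  have hr₀ : (r : ℝ) ≠ 0 := by exact_mod_cast hr.ne'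
  set S := ∑ j, (x j + y j) ^ 2 / 2
  calc _ = ∫ ω : Fin r → Fin N → ℝ, ∑ i, favorFeature r x (ω i) * favorFeature r y (ω i)
          ∂(Measure.pi fun _ ↦ Measure.pi fun _ ↦ gaussianReal 0 1) := rfl
    _ = r * ((r : ℝ)⁻¹ * rexp (∑ j, x j * y j - S) * rexp S) := by
      simp_rw [favorFeature_mul_favorFeature]
      rw [integral_sum_comp_eval_pi ((integrable_exp_sum_mul_pi_gaussianReal 0 1 _).const_mul _),
        integral_const_mul, integral_exp_sum_mul_pi_gaussianReal]
      simp [S]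
    _ = rexp (∑ j, x j * y j) := by
      rw [mul_assoc, ← Real.exp_add, sub_add_cancel, ← mul_assoc, mul_inv_cancel₀ hr₀, one_mul]
end

section
/- Main capacity theorem (expectation form, Case 1): Let $\xi^1,\dots,\xi^M \in \{-1,+1\}^N$ with pairwise Hamming distance at least $\tau N$, let $0 < \rho < \tau/2$, fix $l$ and $\widehat{\xi} \in \{-1,+1\}^N$ with $d_H(\widehat{\xi},\xi^l) \le \rho N$, and a coordinate $i$ with $\widehat{\xi}_i = \xi^l_i$. If $M \le \exp(2N(\tau-2\rho))\frac{1-e^{-2}}{2e^2}$, then $\sum_{\mu=1}^M \exp((\xi^\mu)^\top \widehat{\xi}) - \sum_{\mu=1}^M \exp((\xi^\mu)^\top \mathrm{neg}(\widehat{\xi},i)) > 0$. -/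
open Finset Real

lemma pm_sum {N : ℕ} (x y : Fin N → ℝ) (hx : ∀ j, x j = 1 ∨ x j = -1)
    (hy : ∀ j, y j = 1 ∨ y j = -1) :
    ∑ j, x j * y j = N - 2 * ((Finset.univ.filter fun j => x j ≠ y j).card : ℝ) := by
  classical
  have h : ∀ j, x j * y j = 1 - 2 * (if x j ≠ y j then (1:ℝ) else 0) := by
    intro j
    rcases hx j with h1 | h1 <;> rcases hy j with h2 | h2 <;>
      simp [h1, h2] <;> norm_num
  rw [Finset.sum_congr rfl fun j _ => h j, Finset.sum_sub_distrib, ← Finset.mul_sum,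
    Finset.sum_boole]
  simp [Finset.card_univ]

/-- Capacity theorem, Case 1 -/
theorem capacity_case_agree (N M : ℕ) (τ ρ : ℝ) (hτ : 0 < τ) (hρ : 0 < ρ) (hρτ : ρ < τ / 2)
    (ξ : Fin M → Fin N → ℝ) (hξ : ∀ μ j, ξ μ j = 1 ∨ ξ μ j = -1)
    (hsep : ∀ μ ν, μ ≠ ν →
      τ * N ≤ ((Finset.univ.filter fun j => ξ μ j ≠ ξ ν j).card : ℝ))
    (l : Fin M) (ξh : Fin N → ℝ) (hξh : ∀ j, ξh j = 1 ∨ ξh j = -1)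
    (hclose : ((Finset.univ.filter fun j => ξh j ≠ ξ l j).card : ℝ) ≤ ρ * N)
    (i : Fin N) (hi : ξh i = ξ l i)
    (hM : (M : ℝ) ≤ Real.exp (2 * N * (τ - 2 * ρ)) * ((1 - Real.exp (-2)) / (2 * Real.exp 2))) :
    (∑ μ, Real.exp (∑ j, ξ μ j * ξh j)) -
      (∑ μ, Real.exp (∑ j, ξ μ j * Function.update ξh i (-(ξh i)) j)) > 0 := by
  classical
  set S : Fin M → ℝ := fun μ => ∑ j, ξ μ j * ξh j with hSdef
  set D : Fin M → ℝ := fun μ => ((Finset.univ.filter fun j => ξ μ j ≠ ξh j).card : ℝ) with hDdef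
  have hS : ∀ μ, S μ = N - 2 * D μ := fun μ => pm_sum _ _ (hξ μ) hξh
  -- flipped inner product
  have hflip : ∀ μ, (∑ j, ξ μ j * Function.update ξh i (-(ξh i)) j)
      = S μ - 2 * (ξ μ i * ξh i) := by
    intro μ
    have h : ∀ j ∈ Finset.univ, ξ μ j * Function.update ξh i (-(ξh i)) j
        = ξ μ j * ξh j - (if j = i then 2 * (ξ μ i * ξh i) else 0) := by
      intro j _
      by_cases hj : j = i
      · subst hj; simp [Function.update_self]; ring
      · simp [Function.update_of_ne hj, hj]
    rw [Finset.sum_congr rfl h, Finset.sum_sub_distrib]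
    simp [hSdef]
  -- distance bounds
  have hDl : D l ≤ ρ * N := by
    have : (Finset.univ.filter fun j => ξ l j ≠ ξh j)
        = (Finset.univ.filter fun j => ξh j ≠ ξ l j) := by
      apply Finset.filter_congr; intro j _; simp [ne_comm]
    simpa [hDdef, this] using hclose
  have hDμ : ∀ μ, μ ≠ l → (τ - ρ) * N ≤ D μ := by
    intro μ hμ
    have hsub : (Finset.univ.filter fun j => ξ μ j ≠ ξ l j)
        ⊆ (Finset.univ.filter fun j => ξ μ j ≠ ξh j)
          ∪ (Finset.univ.filter fun j => ξh j ≠ ξ l j) := by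
      intro j hj
      simp only [Finset.mem_filter, Finset.mem_union, Finset.mem_univ, true_and] at *
      by_contra hc
      push_neg at hc
      exact hj (hc.1.trans hc.2)
    have hcard : ((Finset.univ.filter fun j => ξ μ j ≠ ξ l j).card : ℝ)
        ≤ D μ + ((Finset.univ.filter fun j => ξh j ≠ ξ l j).card : ℝ) := by
      have h := (Finset.card_le_card hsub).trans (Finset.card_union_le _ _)
      simp only [hDdef]
      exact_mod_cast h
    have h1 := hsep μ l hμ
    linarith
  -- agreement at i
  have hai : ξ l i * ξh i = 1 := by
    rcases hξh i with h | h <;> rw [← hi] <;> rw [h] <;> norm_num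
  have ha : ∀ μ, ξ μ i * ξh i = 1 ∨ ξ μ i * ξh i = -1 := by
    intro μ
    rcases hξ μ i with h1 | h1 <;> rcases hξh i with h2 | h2 <;> simp [h1, h2]
  -- rewrite difference as single sum
  rw [← Finset.sum_sub_distrib]
  have hterm : ∀ μ, Real.exp (S μ) - Real.exp (∑ j, ξ μ j * Function.update ξh i (-(ξh i)) j)
      = Real.exp (S μ) - Real.exp (S μ - 2 * (ξ μ i * ξh i)) := by
    intro μ; rw [hflip]
  rw [Finset.sum_congr rfl fun μ _ => hterm μ]
  -- split off the l term
  rw [← Finset.add_sum_erase _ _ (Finset.mem_univ l)]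
  have hl_term : Real.exp (S l) - Real.exp (S l - 2 * (ξ l i * ξh i))
      = Real.exp (S l) * (1 - Real.exp (-2)) := by
    rw [hai]; rw [show S l - 2 * 1 = S l + (-2) by ring, Real.exp_add]; ring
  -- bound the l term below
  have hSl : N - 2 * (ρ * N) ≤ S l := by
    rw [hS]; linarith
  have hexp2 : Real.exp (-2) < 1 := by
    rw [Real.exp_lt_one_iff]; norm_num
  have hl_lb : Real.exp ((N : ℝ) - 2 * (ρ * N)) * (1 - Real.exp (-2))
      ≤ Real.exp (S l) - Real.exp (S l - 2 * (ξ l i * ξh i)) := by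
    rw [hl_term]
    apply mul_le_mul_of_nonneg_right (Real.exp_le_exp.mpr hSl)
    linarith
  -- bound each other term below
  have hother : ∀ μ ∈ Finset.univ.erase l,
      -(Real.exp ((N : ℝ) - 2 * ((τ - ρ) * N)) * (Real.exp 2 - 1))
      ≤ Real.exp (S μ) - Real.exp (S μ - 2 * (ξ μ i * ξh i)) := by
    intro μ hμ
    have hμl : μ ≠ l := Finset.ne_of_mem_erase hμ
    have hSμ : S μ ≤ N - 2 * ((τ - ρ) * N) := by
      have := hDμ μ hμl; rw [hS]; linarith
    have h1 : S μ - 2 * (ξ μ i * ξh i) ≤ S μ + 2 := by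
      rcases ha μ with h | h <;> rw [h] <;> linarith
    have h2 : Real.exp (S μ) - Real.exp (S μ - 2 * (ξ μ i * ξh i))
        ≥ Real.exp (S μ) - Real.exp (S μ + 2) := by
      have := Real.exp_le_exp.mpr h1; linarith
    have h3 : Real.exp (S μ) - Real.exp (S μ + 2)
        = -(Real.exp (S μ) * (Real.exp 2 - 1)) := by
      rw [Real.exp_add]; ring
    have h4 : Real.exp (S μ) * (Real.exp 2 - 1)
        ≤ Real.exp ((N : ℝ) - 2 * ((τ - ρ) * N)) * (Real.exp 2 - 1) := by
      apply mul_le_mul_of_nonneg_right (Real.exp_le_exp.mpr hSμ)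
      have : (1:ℝ) < Real.exp 2 := by
        rw [show (2:ℝ) = -(-2) by ring, Real.exp_neg]
        rw [lt_inv_comm₀] <;> [skip; norm_num; exact Real.exp_pos _]
        simpa using hexp2
      linarith
    linarith
  have hsum_other : -(((M : ℝ) - 1) * (Real.exp ((N : ℝ) - 2 * ((τ - ρ) * N)) * (Real.exp 2 - 1)))
      ≤ ∑ μ ∈ Finset.univ.erase l,
          (Real.exp (S μ) - Real.exp (S μ - 2 * (ξ μ i * ξh i))) := by
    have hcard : ((Finset.univ.erase l).card : ℝ) = (M : ℝ) - 1 := by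
      have hM1 : 1 ≤ M := Fin.pos l
      rw [Finset.card_erase_of_mem (Finset.mem_univ l), Finset.card_univ, Fintype.card_fin,
        Nat.cast_sub hM1, Nat.cast_one]
    calc -(((M : ℝ) - 1) * (Real.exp ((N : ℝ) - 2 * ((τ - ρ) * N)) * (Real.exp 2 - 1)))
        = ∑ _μ ∈ Finset.univ.erase l,
            -(Real.exp ((N : ℝ) - 2 * ((τ - ρ) * N)) * (Real.exp 2 - 1)) := by
          rw [Finset.sum_const, nsmul_eq_mul, hcard]; ring
      _ ≤ _ := Finset.sum_le_sum hother
  -- final arithmetic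
  have key : ((M : ℝ) - 1) * (Real.exp ((N : ℝ) - 2 * ((τ - ρ) * N)) * (Real.exp 2 - 1))
      < Real.exp ((N : ℝ) - 2 * (ρ * N)) * (1 - Real.exp (-2)) := by
    have hE : Real.exp ((N : ℝ) - 2 * (ρ * N))
        = Real.exp (2 * N * (τ - 2 * ρ)) * Real.exp ((N : ℝ) - 2 * ((τ - ρ) * N)) := by
      rw [← Real.exp_add]; ring_nf
    have hBpos := Real.exp_pos ((N : ℝ) - 2 * ((τ - ρ) * N))
    have hEpos := Real.exp_pos (2 * N * (τ - 2 * ρ))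
    have he2pos := Real.exp_pos (2 : ℝ)
    have he2gt : (1:ℝ) < Real.exp 2 := by
      nlinarith [Real.exp_pos (-2:ℝ), Real.add_one_le_exp (2:ℝ)]
    -- from hM : M ≤ E * (1 - e^{-2})/(2 e^2)
    have h1 : ((M:ℝ) - 1) * (Real.exp 2 - 1)
        < Real.exp (2 * N * (τ - 2 * ρ)) * (1 - Real.exp (-2)) := by
      have hMle : ((M:ℝ) - 1) * (Real.exp 2 - 1) ≤ (M:ℝ) * (Real.exp 2 - 1) := by
        nlinarith
      have h2 : (M:ℝ) * (Real.exp 2 - 1)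
          ≤ Real.exp (2 * N * (τ - 2 * ρ)) * ((1 - Real.exp (-2)) / (2 * Real.exp 2)) * (Real.exp 2 - 1) := by
        nlinarith
      have h3 : Real.exp (2 * N * (τ - 2 * ρ)) * ((1 - Real.exp (-2)) / (2 * Real.exp 2)) * (Real.exp 2 - 1)
          < Real.exp (2 * N * (τ - 2 * ρ)) * (1 - Real.exp (-2)) := by
        have hfrac : (1 - Real.exp (-2)) / (2 * Real.exp 2) * (Real.exp 2 - 1)
            < 1 - Real.exp (-2) := by
          rw [div_mul_eq_mul_div, div_lt_iff₀ (by positivity)]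
          nlinarith
        rw [mul_assoc]
        exact mul_lt_mul_of_pos_left hfrac hEpos
      linarith
    calc ((M : ℝ) - 1) * (Real.exp ((N : ℝ) - 2 * ((τ - ρ) * N)) * (Real.exp 2 - 1))
        = (((M:ℝ) - 1) * (Real.exp 2 - 1)) * Real.exp ((N : ℝ) - 2 * ((τ - ρ) * N)) := by ring
      _ < (Real.exp (2 * N * (τ - 2 * ρ)) * (1 - Real.exp (-2))) * Real.exp ((N : ℝ) - 2 * ((τ - ρ) * N)) := by
          apply mul_lt_mul_of_pos_right h1 hBpos
      _ = Real.exp ((N : ℝ) - 2 * (ρ * N)) * (1 - Real.exp (-2)) := by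
          rw [hE]; ring
  linarith
end

section
/- Main capacity theorem (expectation form, Case 2): Under the same setup (memories $\xi^1,\dots,\xi^M \in \{-1,+1\}^N$ with pairwise Hamming distance $\ge \tau N$, $0 < \rho < \tau/2$, $d_H(\widehat{\xi},\xi^l) \le \rho N$) with coordinate $i$ satisfying $\widehat{\xi}_i = -\xi^l_i$, if $M \le \exp(2N(\tau-2\rho))\frac{e^2 - 1}{2e^2}$, then $\sum_{\mu=1}^M \exp((\xi^\mu)^\top \widehat{\xi}) - \sum_{\mu=1}^M \exp((\xi^\mu)^\top \mathrm{neg}(\widehat{\xi},i)) < 0$. -/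
/-- Capacity theorem, Case 2: with memories pairwise `τN`-separated, `0 < ρ < τ/2`,
`d_H(ξ̂, ξˡ) ≤ ρN`, a coordinate `i` where `ξ̂ᵢ = -ξˡᵢ`, and
`M ≤ exp(2N(τ-2ρ)) (e²-1)/(2e²)`, flipping coordinate `i` strictly increases
`∑_μ exp((ξᵘ)ᵀ·)`, i.e. erroneous bits get corrected. -/
theorem capacity_case_disagree (N M : ℕ) (τ ρ : ℝ) (hτ : 0 < τ) (hρ : 0 < ρ) (hρτ : ρ < τ / 2)
    (ξ : Fin M → Fin N → ℝ) (hξ : ∀ μ j, ξ μ j = 1 ∨ ξ μ j = -1)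
    (hsep : ∀ μ ν, μ ≠ ν →
      τ * N ≤ ((Finset.univ.filter fun j => ξ μ j ≠ ξ ν j).card : ℝ))
    (l : Fin M) (ξh : Fin N → ℝ) (hξh : ∀ j, ξh j = 1 ∨ ξh j = -1)
    (hclose : ((Finset.univ.filter fun j => ξh j ≠ ξ l j).card : ℝ) ≤ ρ * N)
    (i : Fin N) (hi : ξh i = -(ξ l i))
    (hM : (M : ℝ) ≤ Real.exp (2 * N * (τ - 2 * ρ)) * ((Real.exp 2 - 1) / (2 * Real.exp 2))) :
    (∑ μ, Real.exp (∑ j, ξ μ j * ξh j)) -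
      (∑ μ, Real.exp (∑ j, ξ μ j * Function.update ξh i (-(ξh i)) j)) < 0 := by
  classical
  set c : ℝ := Real.exp 2 with hc_def
  have hc : 1 < c := by
    rw [hc_def, ← Real.exp_zero]
    exact Real.exp_lt_exp.2 (by norm_num)
  set d : Fin M → ℝ := fun μ => ((Finset.univ.filter fun j => ξ μ j ≠ ξh j).card : ℝ) with hd
  set S : Fin M → ℝ := fun μ => ∑ j, ξ μ j * ξh j with hS
  set S' : Fin M → ℝ := fun μ => ∑ j, ξ μ j * Function.update ξh i (-(ξh i)) j with hS'
  -- dot product formula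
  have hdot : ∀ μ, S μ = N - 2 * d μ := by
    intro μ
    have hsplit := Finset.sum_filter_add_sum_filter_not Finset.univ
      (fun j => ξ μ j ≠ ξh j) (fun j => ξ μ j * ξh j)
    have h1 : ∑ j ∈ Finset.univ.filter (fun j => ξ μ j ≠ ξh j), ξ μ j * ξh j = - d μ := by
      rw [Finset.sum_congr rfl (g := fun _ => (-1 : ℝ)) (fun j hj => ?_)]
      · simp [hd]
      · simp only [Finset.mem_filter] at hj
        rcases hξ μ j with h | h <;> rcases hξh j with h' | h' <;>
          simp [h, h'] at hj ⊢
    have h2 : ∑ j ∈ Finset.univ.filter (fun j => ¬ (ξ μ j ≠ ξh j)), ξ μ j * ξh j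
        = ((Finset.univ.filter (fun j => ¬ (ξ μ j ≠ ξh j))).card : ℝ) := by
      rw [Finset.sum_congr rfl (g := fun _ => (1 : ℝ)) (fun j hj => ?_)]
      · simp
      · simp only [Finset.mem_filter, not_not] at hj
        rcases hξh j with h' | h' <;> simp [hj.2, h']
    have hcard : (Finset.univ.filter (fun j => ξ μ j ≠ ξh j)).card
        + (Finset.univ.filter (fun j => ¬ (ξ μ j ≠ ξh j))).card = N := by
      rw [Finset.card_filter_add_card_filter_not]
      simp
    have hcardR : d μ + ((Finset.univ.filter (fun j => ¬ (ξ μ j ≠ ξh j))).card : ℝ) = N := by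
      simp only [hd]
      exact_mod_cast hcard
    simp only [hS]
    rw [← hsplit, h1, h2]
    linarith
  -- flip formula
  have hflip : ∀ μ, S' μ = S μ - 2 * (ξ μ i * ξh i) := by
    intro μ
    have key : ∑ j, (ξ μ j * Function.update ξh i (-(ξh i)) j - ξ μ j * ξh j)
        = - (2 * (ξ μ i * ξh i)) := by
      rw [Finset.sum_eq_single i]
      · simp [Function.update_self]; ring
      · intro j _ hj
        rw [Function.update_of_ne hj]; ring
      · simp
    have := Finset.sum_sub_distrib (s := Finset.univ)
      (f := fun j => ξ μ j * Function.update ξh i (-(ξh i)) j) (g := fun j => ξ μ j * ξh j)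
    rw [key] at this
    simp only [hS', hS]
    linarith
  -- d l ≤ ρ N
  have hdl : d l ≤ ρ * N := by
    have : (Finset.univ.filter fun j => ξ l j ≠ ξh j)
        = (Finset.univ.filter fun j => ξh j ≠ ξ l j) := by
      apply Finset.filter_congr; intro j _; exact ne_comm
    simpa [hd, this] using hclose
  -- d μ ≥ τN - ρN for μ ≠ l
  have hdmu : ∀ μ, μ ≠ l → τ * N - ρ * N ≤ d μ := by
    intro μ hμ
    have hsub : (Finset.univ.filter fun j => ξ μ j ≠ ξ l j)
        ⊆ (Finset.univ.filter fun j => ξ μ j ≠ ξh j)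
          ∪ (Finset.univ.filter fun j => ξh j ≠ ξ l j) := by
      intro j hj
      simp only [Finset.mem_filter, Finset.mem_union, Finset.mem_univ, true_and] at hj ⊢
      by_contra h
      push_neg at h
      exact hj (h.1.trans h.2)
    have hcard := Finset.card_le_card hsub
    have hcard2 := Finset.card_union_le
      (Finset.univ.filter fun j => ξ μ j ≠ ξh j)
      (Finset.univ.filter fun j => ξh j ≠ ξ l j)
    have h1 := hsep μ l hμ
    have : ((Finset.univ.filter fun j => ξ μ j ≠ ξ l j).card : ℝ)
        ≤ d μ + ((Finset.univ.filter fun j => ξh j ≠ ξ l j).card : ℝ) := by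
      have h3 := hcard.trans hcard2
      simp only [hd]
      exact_mod_cast h3
    linarith
  -- bounds on S
  set A : ℝ := Real.exp ((N : ℝ) - 2 * (τ * N - ρ * N)) with hA
  set B : ℝ := Real.exp ((N : ℝ) - 2 * (ρ * N)) with hB
  have hApos : 0 < A := Real.exp_pos _
  have hBpos : 0 < B := Real.exp_pos _
  have hexpSmu : ∀ μ, μ ≠ l → Real.exp (S μ) ≤ A := by
    intro μ hμ
    apply Real.exp_le_exp.2
    rw [hdot μ]
    have := hdmu μ hμ
    linarith
  have hexpSl : B ≤ Real.exp (S l) := by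
    apply Real.exp_le_exp.2
    rw [hdot l]
    linarith
  -- the l term
  have hSl' : S' l = S l + 2 := by
    rw [hflip l]
    have : ξ l i * ξh i = -1 := by
      rw [hi]
      rcases hξ l i with h | h <;> rw [h] <;> norm_num
    rw [this]; ring
  have hlterm : Real.exp (S l) - Real.exp (S' l) ≤ B * (1 - c) := by
    rw [hSl', Real.exp_add]
    have : Real.exp (S l) - Real.exp (S l) * c = Real.exp (S l) * (1 - c) := by ring
    rw [this]
    have h1 : Real.exp (S l) * (1 - c) ≤ B * (1 - c) := by
      apply mul_le_mul_of_nonpos_right hexpSl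
      linarith
    exact h1
  -- other terms
  have hothers : ∑ μ ∈ Finset.univ.erase l, (Real.exp (S μ) - Real.exp (S' μ))
      ≤ (M : ℝ) * A := by
    have h1 : ∀ μ ∈ Finset.univ.erase l, Real.exp (S μ) - Real.exp (S' μ) ≤ A := by
      intro μ hμ
      have hμl : μ ≠ l := (Finset.mem_erase.1 hμ).1
      have := Real.exp_pos (S' μ)
      have := hexpSmu μ hμl
      linarith
    calc ∑ μ ∈ Finset.univ.erase l, (Real.exp (S μ) - Real.exp (S' μ))
        ≤ ∑ _μ ∈ Finset.univ.erase l, A := Finset.sum_le_sum h1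
      _ = ((Finset.univ.erase l).card : ℝ) * A := by rw [Finset.sum_const]; simp [mul_comm]
      _ ≤ (M : ℝ) * A := by
          apply mul_le_mul_of_nonneg_right _ hApos.le
          have : (Finset.univ.erase l).card ≤ M := by
            calc (Finset.univ.erase l).card ≤ (Finset.univ : Finset (Fin M)).card :=
              Finset.card_le_card (Finset.erase_subset _ _)
            _ = M := by simp
          exact_mod_cast this
  -- combine
  have hsplit : (∑ μ, Real.exp (S μ)) - (∑ μ, Real.exp (S' μ))
      = ∑ μ ∈ Finset.univ.erase l, (Real.exp (S μ) - Real.exp (S' μ))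
        + (Real.exp (S l) - Real.exp (S' l)) := by
    rw [← Finset.sum_sub_distrib, ← Finset.sum_erase_add _ _ (Finset.mem_univ l)]
  rw [show (∑ μ, Real.exp (∑ j, ξ μ j * ξh j)) -
      (∑ μ, Real.exp (∑ j, ξ μ j * Function.update ξh i (-(ξh i)) j))
      = (∑ μ, Real.exp (S μ)) - (∑ μ, Real.exp (S' μ)) from rfl, hsplit]
  -- final numeric estimate
  have hMA : (M : ℝ) * A ≤ B * ((c - 1) / (2 * c)) := by
    have h1 : (M : ℝ) * A ≤ Real.exp (2 * N * (τ - 2 * ρ)) * ((c - 1) / (2 * c)) * A :=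
      mul_le_mul_of_nonneg_right hM hApos.le
    have h2 : Real.exp (2 * N * (τ - 2 * ρ)) * A = B := by
      rw [hA, hB, ← Real.exp_add]
      congr 1; ring
    calc (M : ℝ) * A ≤ Real.exp (2 * N * (τ - 2 * ρ)) * ((c - 1) / (2 * c)) * A := h1
      _ = (Real.exp (2 * N * (τ - 2 * ρ)) * A) * ((c - 1) / (2 * c)) := by ring
      _ = B * ((c - 1) / (2 * c)) := by rw [h2]
  have hcpos : (0 : ℝ) < c := by linarith
  have hfrac : B * ((c - 1) / (2 * c)) < B * (c - 1) := by
    apply mul_lt_mul_of_pos_left _ hBpos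
    rw [div_lt_iff₀ (by linarith)]
    nlinarith
  nlinarith [hothers, hlterm, hMA, hfrac]
end

section
/- Combined capacity theorem: Let $\xi^1,\dots,\xi^M \in \{-1,+1\}^N$ with pairwise Hamming distance at least $\tau N$, $0 < \rho < \tau/2$, and $M \le \exp(2N(\tau-2\rho))\frac{1-e^{-2}}{2e^2}$. Define energy $E(\xi) = -\sum_{\mu=1}^M \exp(\xi^\top\xi^\mu)$. Then for every $l$, every $\widehat{\xi}$ with $d_H(\widehat{\xi},\xi^l) \le \rho N$, and every coordinate $i$: $E(\mathrm{neg}(\widehat{\xi},i)) > E(\widehat{\xi})$ if $\widehat{\xi}_i = \xi^l_i$, and $E(\mathrm{neg}(\widehat{\xi},i)) < E(\widehat{\xi})$ if $\widehat{\xi}_i = -\xi^l_i$. -/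
/-!
For sign vectors the overlap is `x ⬝ᵥ y = N - 2 d_H(x, y)`, and flipping coordinate `i` of `x`
lowers the overlap with `ξ^μ` by `2 xᵢ ξ^μ_i = ±2`. The energy change is therefore
`∑_μ (exp S_μ - exp (S_μ ∓ 2))` with `S_μ = x ⬝ᵥ ξ^μ`. The term of the nearby memory `ξˡ` has the
sign we want and size at least `exp (N - 2ρN) (1 - e⁻²)`, while by the triangle inequality for the
Hamming distance every other term is at most `exp (N - 2(τ - ρ)N) (e² - 1)` in absolute value.
The capacity bound on `M` makes the sum of the latter smaller than the former by the factor
`(1 - e⁻²) / 2`.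
-/

open Real Finset Function Matrix

def IsSignVector {ι : Type*} (x : ι → ℝ) : Prop :=
  ∀ j, x j = 1 ∨ x j = -1

lemma mul_eq_one_sub_two_ite {a b : ℝ} (ha : a = 1 ∨ a = -1) (hb : b = 1 ∨ b = -1) :
    a * b = 1 - 2 * if a ≠ b then 1 else 0 := by
  rcases ha with rfl | rfl <;> rcases hb with rfl | rfl <;> norm_num

lemma mul_eq_one_or_eq_neg_one {a b : ℝ} (ha : a = 1 ∨ a = -1) (hb : b = 1 ∨ b = -1) :
    a * b = 1 ∨ a * b = -1 := by
  rcases ha with rfl | rfl <;> rcases hb with rfl | rfl <;> norm_num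

namespace IsSignVector

variable {ι : Type*} [Fintype ι] {x y z : ι → ℝ}

theorem dotProduct_eq (hx : IsSignVector x) (hy : IsSignVector y) :
    x ⬝ᵥ y = Fintype.card ι - 2 * hammingDist x y := by
  simp only [dotProduct, mul_eq_one_sub_two_ite (hx _) (hy _), sum_sub_distrib, ← mul_sum,
    sum_boole, sum_const, card_univ, nsmul_eq_mul, mul_one]
  rfl

theorem le_dotProduct (hx : IsSignVector x) (hy : IsSignVector y) {r : ℝ}
    (hxy : hammingDist x y ≤ r) : Fintype.card ι - 2 * r ≤ x ⬝ᵥ y := by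
  rw [hx.dotProduct_eq hy]
  linarith

theorem dotProduct_le (hx : IsSignVector x) (hz : IsSignVector z) {r d : ℝ}
    (hxy : hammingDist x y ≤ r) (hzy : d ≤ hammingDist z y) :
    x ⬝ᵥ z ≤ Fintype.card ι - 2 * (d - r) := by
  have htri : (hammingDist z y : ℝ) ≤ hammingDist x z + hammingDist x y := by
    rw [hammingDist_comm x z]
    exact_mod_cast hammingDist_triangle z x y
  rw [hx.dotProduct_eq hz]
  linarith

end IsSignVector

theorem dotProduct_update_neg {ι R : Type*} [Fintype ι] [DecidableEq ι] [CommRing R]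
    (x y : ι → R) (i : ι) : update x i (-x i) ⬝ᵥ y = x ⬝ᵥ y - 2 * (x i * y i) := by
  have : update x i (-x i) = x - Pi.single i (2 * x i) := by
    ext j
    rcases eq_or_ne j i with rfl | h
    · simp only [update_self, Pi.sub_apply, Pi.single_eq_same]; ring
    · simp [h]
  rw [this, sub_dotProduct, single_dotProduct, mul_assoc]

section
variable {α κ : Type*} [AddCommGroup α] [LinearOrder α] [IsOrderedAddMonoid α]
  {s : Finset κ} {t : κ → α} {l : κ} [DecidableEq κ]

theorem Finset.sum_pos_of_sum_erase_abs_lt (hl : l ∈ s) (h : ∑ μ ∈ s.erase l, |t μ| < t l) :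
    0 < ∑ μ ∈ s, t μ := by
  rw [← add_sum_erase s t hl]
  calc 0 < t l - |∑ μ ∈ s.erase l, t μ| :=
        sub_pos.mpr ((abs_sum_le_sum_abs t (s.erase l)).trans_lt h)
    _ ≤ t l + ∑ μ ∈ s.erase l, t μ := by
        rw [sub_eq_add_neg]; gcongr; exact neg_abs_le _

theorem Finset.sum_neg_of_sum_erase_abs_lt (hl : l ∈ s) (h : ∑ μ ∈ s.erase l, |t μ| < -t l) :
    ∑ μ ∈ s, t μ < 0 := by
  have := Finset.sum_pos_of_sum_erase_abs_lt (t := fun μ => -t μ) hl (by simpa using h)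
  simpa using this
end

theorem exp_sub_exp_sub_two_mul_of_eq_one (s : ℝ) {c : ℝ} (hc : c = 1) :
    exp s - exp (s - 2 * c) = exp s * (1 - exp (-2)) := by
  rw [hc, mul_one, sub_eq_add_neg s, exp_add]; ring

theorem exp_sub_exp_sub_two_mul_of_eq_neg_one (s : ℝ) {c : ℝ} (hc : c = -1) :
    exp s - exp (s - 2 * c) = -(exp s * (exp 2 - 1)) := by
  rw [hc, show s - 2 * -1 = s + 2 by ring, exp_add]; ring

theorem one_sub_exp_neg_two_le_exp_two_sub_one : 1 - exp (-2) ≤ exp 2 - 1 := by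
  linarith [add_one_le_exp 2, exp_pos (-2)]

theorem one_sub_exp_neg_two_pos : 0 < 1 - exp (-2) :=
  sub_pos.mpr (exp_lt_one_iff.mpr (by norm_num))

theorem exp_two_sub_one_pos : 0 < exp 2 - 1 := by
  linarith [add_one_le_exp (2 : ℝ)]

theorem abs_exp_sub_exp_sub_two_mul_le (s : ℝ) {c : ℝ} (hc : c = 1 ∨ c = -1) :
    |exp s - exp (s - 2 * c)| ≤ exp s * (exp 2 - 1) := by
  rcases hc with hc | hc
  · rw [exp_sub_exp_sub_two_mul_of_eq_one s hc, abs_of_nonneg]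
    · exact mul_le_mul_of_nonneg_left one_sub_exp_neg_two_le_exp_two_sub_one (exp_pos s).le
    · exact mul_nonneg (exp_pos s).le one_sub_exp_neg_two_pos.le
  · rw [exp_sub_exp_sub_two_mul_of_eq_neg_one s hc, abs_neg, abs_of_nonneg]
    exact mul_nonneg (exp_pos s).le exp_two_sub_one_pos.le

noncomputable def capacity (n τ ρ : ℝ) : ℝ :=
  exp (2 * n * (τ - 2 * ρ)) * ((1 - exp (-2)) / (2 * exp 2))

theorem mul_exp_lt_of_le_capacity {m n τ ρ : ℝ} (hm : m ≤ capacity n τ ρ) :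
    m * (exp (n - 2 * (τ * n - ρ * n)) * (exp 2 - 1)) < exp (n - 2 * (ρ * n)) * (1 - exp (-2)) := by
  have hP : 0 < 1 - exp (-2) := one_sub_exp_neg_two_pos
  have hP2 : 1 - exp (-2) < 2 := by linarith [exp_pos (-2)]
  have hQ : exp 2 - 1 = exp 2 * (1 - exp (-2)) := by rw [mul_sub, ← exp_add]; norm_num
  have hexp : exp (n - 2 * (ρ * n)) =
      exp (2 * n * (τ - 2 * ρ)) * exp (n - 2 * (τ * n - ρ * n)) := by
    rw [← exp_add]; ring_nf
  calc m * (exp (n - 2 * (τ * n - ρ * n)) * (exp 2 - 1))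
      ≤ capacity n τ ρ * (exp (n - 2 * (τ * n - ρ * n)) * (exp 2 - 1)) :=
        mul_le_mul_of_nonneg_right hm (by rw [hQ]; positivity)
    _ = exp (n - 2 * (ρ * n)) * (1 - exp (-2)) * ((1 - exp (-2)) / 2) := by
        rw [capacity, hQ, hexp]
        field_simp
    _ < exp (n - 2 * (ρ * n)) * (1 - exp (-2)) := by
        have := mul_pos (exp_pos (n - 2 * (ρ * n))) hP
        nlinarith

noncomputable def energy {ι κ : Type*} [Fintype ι] [Fintype κ] (ξ : κ → ι → ℝ) (x : ι → ℝ) : ℝ :=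
  -∑ μ, exp (x ⬝ᵥ ξ μ)

theorem energy_update_neg_sub {ι κ : Type*} [Fintype ι] [DecidableEq ι] [Fintype κ]
    (ξ : κ → ι → ℝ) (x : ι → ℝ) (i : ι) :
    energy ξ (update x i (-x i)) - energy ξ x =
      ∑ μ, (exp (x ⬝ᵥ ξ μ) - exp (x ⬝ᵥ ξ μ - 2 * (x i * ξ μ i))) := by
  simp only [energy, dotProduct_update_neg, sum_sub_distrib]
  ring

theorem sum_erase_abs_exp_sub_exp_lt {ι κ : Type*} [Fintype ι] [Fintype κ] [DecidableEq κ]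
    {ξ : κ → ι → ℝ} {x : ι → ℝ} {l : κ} {τ ρ : ℝ}
    (hξ : ∀ μ, IsSignVector (ξ μ)) (hx : IsSignVector x)
    (hsep : ∀ μ ≠ l, τ * Fintype.card ι ≤ hammingDist (ξ μ) (ξ l))
    (hM : (Fintype.card κ : ℝ) ≤ capacity (Fintype.card ι) τ ρ)
    (hball : (hammingDist x (ξ l) : ℝ) ≤ ρ * Fintype.card ι) (i : ι) :
    ∑ μ ∈ univ.erase l, |exp (x ⬝ᵥ ξ μ) - exp (x ⬝ᵥ ξ μ - 2 * (x i * ξ μ i))| <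
      exp (x ⬝ᵥ ξ l) * (1 - exp (-2)) := by
  set n : ℝ := (Fintype.card ι : ℝ)
  have hterm : ∀ μ ∈ univ.erase l, |exp (x ⬝ᵥ ξ μ) - exp (x ⬝ᵥ ξ μ - 2 * (x i * ξ μ i))| ≤
      exp (n - 2 * (τ * n - ρ * n)) * (exp 2 - 1) := by
    intro μ hμ
    refine (abs_exp_sub_exp_sub_two_mul_le _ (mul_eq_one_or_eq_neg_one (hx i) (hξ μ i))).trans ?_
    gcongr
    · exact exp_two_sub_one_pos.le
    · exact hx.dotProduct_le (hξ μ) hball (hsep μ (ne_of_mem_erase hμ))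
  calc _ ≤ (Fintype.card κ : ℝ) * (exp (n - 2 * (τ * n - ρ * n)) * (exp 2 - 1)) := by
        refine (sum_le_card_nsmul _ _ _ hterm).trans ?_
        rw [nsmul_eq_mul]
        gcongr
        · exact mul_nonneg (exp_pos _).le exp_two_sub_one_pos.le
        · exact card_erase_le.trans_eq card_univ
    _ < exp (n - 2 * (ρ * n)) * (1 - exp (-2)) := mul_exp_lt_of_le_capacity hM
    _ ≤ exp (x ⬝ᵥ ξ l) * (1 - exp (-2)) := by
        gcongr
        · exact one_sub_exp_neg_two_pos.le
        · exact hx.le_dotProduct (hξ l) hball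

theorem capacity_combined_general (N M : ℕ) (τ ρ : ℝ)
    (ξ : Fin M → Fin N → ℝ) (hξ : ∀ μ j, ξ μ j = 1 ∨ ξ μ j = -1)
    (hsep : ∀ μ ν, μ ≠ ν →
      τ * N ≤ ((Finset.univ.filter fun j => ξ μ j ≠ ξ ν j).card : ℝ))
    (hM : (M : ℝ) ≤ Real.exp (2 * N * (τ - 2 * ρ)) * ((1 - Real.exp (-2)) / (2 * Real.exp 2)))
    (E : (Fin N → ℝ) → ℝ) (hE : ∀ η, E η = -∑ μ, Real.exp (∑ j, η j * ξ μ j)) :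
    ∀ l : Fin M, ∀ ξh : Fin N → ℝ, (∀ j, ξh j = 1 ∨ ξh j = -1) →
      ((Finset.univ.filter fun j => ξh j ≠ ξ l j).card : ℝ) ≤ ρ * N →
      ∀ i : Fin N,
        (ξh i = ξ l i → E (Function.update ξh i (-(ξh i))) > E ξh) ∧
        (ξh i = -(ξ l i) → E (Function.update ξh i (-(ξh i))) < E ξh) := by
  intro l ξh hξh hball i
  obtain rfl : E = energy ξ := funext hE
  have hcross := sum_erase_abs_exp_sub_exp_lt hξ hξh (l := l)
    (fun μ hμ => by simpa [hammingDist] using hsep μ l hμ)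
    (by simpa [capacity] using hM) (by simpa [hammingDist] using hball) i
  constructor
  · intro hagree
    rw [gt_iff_lt, ← sub_pos, energy_update_neg_sub]
    refine sum_pos_of_sum_erase_abs_lt (mem_univ l) ?_
    rwa [exp_sub_exp_sub_two_mul_of_eq_one _
      (by rw [hagree]; exact mul_self_eq_one_iff.mpr (hξ l i))]
  · intro hdis
    rw [← sub_neg, energy_update_neg_sub]
    refine sum_neg_of_sum_erase_abs_lt (mem_univ l) ?_
    rw [exp_sub_exp_sub_two_mul_of_eq_neg_one _
      (by rw [hdis, neg_mul, mul_self_eq_one_iff.mpr (hξ l i)]), neg_neg]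
    exact hcross.trans_le
      (mul_le_mul_of_nonneg_left one_sub_exp_neg_two_le_exp_two_sub_one (exp_pos _).le)

/-- Combined capacity theorem: with memories pairwise `τN`-separated, `0 < ρ < τ/2`
and `M ≤ exp(2N(τ-2ρ)) (1-e⁻²)/(2e²)`, for the energy `E(ξ) = -∑_μ exp(ξᵀξᵘ)` and any
input in the Hamming ball of radius `ρN` around a memory `ξˡ`: flipping a coordinate that
agrees with `ξˡ` strictly increases the energy, while flipping a coordinate that disagrees
strictly decreases it. -/
theorem capacity_combined (N M : ℕ) (τ ρ : ℝ) (hτ : 0 < τ) (hρ : 0 < ρ) (hρτ : ρ < τ / 2)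
    (ξ : Fin M → Fin N → ℝ) (hξ : ∀ μ j, ξ μ j = 1 ∨ ξ μ j = -1)
    (hsep : ∀ μ ν, μ ≠ ν →
      τ * N ≤ ((Finset.univ.filter fun j => ξ μ j ≠ ξ ν j).card : ℝ))
    (hM : (M : ℝ) ≤ Real.exp (2 * N * (τ - 2 * ρ)) * ((1 - Real.exp (-2)) / (2 * Real.exp 2)))
    (E : (Fin N → ℝ) → ℝ) (hE : ∀ η, E η = -∑ μ, Real.exp (∑ j, η j * ξ μ j)) :
    ∀ l : Fin M, ∀ ξh : Fin N → ℝ, (∀ j, ξh j = 1 ∨ ξh j = -1) →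
      ((Finset.univ.filter fun j => ξh j ≠ ξ l j).card : ℝ) ≤ ρ * N →
      ∀ i : Fin N,
        (ξh i = ξ l i → E (Function.update ξh i (-(ξh i))) > E ξh) ∧
        (ξh i = -(ξ l i) → E (Function.update ξh i (-(ξh i))) < E ξh) :=
  capacity_combined_general N M τ ρ ξ hξ hsep hM E hE
end
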